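/- Let T = (T_1,…,T_n) be a commuting multicontraction on a complex Hilbert space H and let K = ker(1_H − A_∞(T)). Then K is invariant under each adjoint T_i* (i = 1,…,n), and the compression T̂ of T to K, defined by T̂_i = P_K T_i|_K (P_K the orthogonal projection onto K), satisfies Σ_{i=1}^n T̂_i T̂_i* = 1_K; equivalently, the defect operator D_{T̂*} = (1_K − Σ T̂_i T̂_i*)^{1/2} is zero. -/

import Mathlib

open ContinuousLinearMap Filter

set_option synthInstance.maxHeartbeats 1000000
set_option maxHeartbeats 1000000


/-- `PiLp` over complete fibers is complete. -/
instance PiLp.instCompleteSpace' (p : ENNReal) [Fact (1 ≤ p)] {ι : Type*} [Fintype ι]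
    (β : ι → Type*) [∀ i, NormedAddCommGroup (β i)] [∀ i, CompleteSpace (β i)] :
    CompleteSpace (PiLp p β) :=
  (UniformEquiv.completeSpace_iff
    (PiLp.uniformEquiv p β)).mpr inferInstance

noncomputable section

variable {E₁ E₂ : Type*} [NormedAddCommGroup E₁] [InnerProductSpace ℂ E₁] [CompleteSpace E₁]
  [NormedAddCommGroup E₂] [InnerProductSpace ℂ E₂] [CompleteSpace E₂]

/-- The defect operator `D_C = (1 - C*C)^(1/2)` of a contraction `C`. -/
def defect (C : E₁ →L[ℂ] E₂) : E₁ →L[ℂ] E₁ := CFC.sqrt (1 - adjoint C ∘L C)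

/-- The defect operator `D_{C*} = (1 - C C*)^(1/2)` of a contraction `C`. -/
def defectStar (C : E₁ →L[ℂ] E₂) : E₂ →L[ℂ] E₂ := CFC.sqrt (1 - C ∘L adjoint C)

/-- The fractional transform `Ψ_A(W) = A + D_{A*} (1 + W A*)⁻¹ W D_A`. -/
def Psi (A W : E₁ →L[ℂ] E₂) : E₁ →L[ℂ] E₂ :=
  A + defectStar A ∘L Ring.inverse (1 + W ∘L adjoint A) ∘L (W ∘L defect A)

/-- The defect space `𝒟_C = closure (D_C E₁)`. -/
def defectSpace (C : E₁ →L[ℂ] E₂) : Submodule ℂ E₁ :=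
  (defect C).range.topologicalClosure

/-- The defect space `𝒟_{C*} = closure (D_{C*} E₂)`. -/
def defectStarSpace (C : E₁ →L[ℂ] E₂) : Submodule ℂ E₂ :=
  (defectStar C).range.topologicalClosure

theorem mem_defectSpace (C : E₁ →L[ℂ] E₂) (x : E₁) : defect C x ∈ defectSpace C :=
  Submodule.le_topologicalClosure _ (LinearMap.mem_range_self _ x)

theorem mem_defectStarSpace (C : E₁ →L[ℂ] E₂) (y : E₂) : defectStar C y ∈ defectStarSpace C :=
  Submodule.le_topologicalClosure _ (LinearMap.mem_range_self _ y)

variable {H : Type*} [NormedAddCommGroup H] [InnerProductSpace ℂ H] [CompleteSpace H] {n : ℕ}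

/-- `H^n` with its Hilbert space (ℓ²) structure. -/
abbrev Hn (H : Type*) (n : ℕ) : Type _ := PiLp 2 (fun _ : Fin n => H)

/-- The `i`-th coordinate projection `H^n → H`. -/
def projL (i : Fin n) : Hn H n →L[ℂ] H :=
  ContinuousLinearMap.proj i ∘L
    (PiLp.continuousLinearEquiv 2 ℂ (fun _ : Fin n => H)).toContinuousLinearMap

/-- The `i`-th coordinate inclusion `H → H^n`. -/
def inclL (i : Fin n) : H →L[ℂ] Hn H n :=
  (PiLp.continuousLinearEquiv 2 ℂ (fun _ : Fin n => H)).symm.toContinuousLinearMap ∘L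
    ContinuousLinearMap.pi (fun j => if j = i then ContinuousLinearMap.id ℂ H else 0)

/-- The row operator `H^n → H` associated to an `n`-tuple of operators. -/
def rowOp (T : Fin n → H →L[ℂ] H) : Hn H n →L[ℂ] H := ∑ i, T i ∘L projL i

/-- The row operator `H^n → H`, `(x_1, …, x_n) ↦ Σ z_i x_i`, associated with `z ∈ ℂⁿ`. -/
def rowC (z : EuclideanSpace ℂ (Fin n)) : Hn H n →L[ℂ] H := ∑ i, z i • projL i

/-- The completely positive map `ρ_T(X) = Σ T_i X T_i^*`. -/
def rho (T : Fin n → H →L[ℂ] H) (X : H →L[ℂ] H) : H →L[ℂ] H :=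
  ∑ i, T i ∘L X ∘L adjoint (T i)

/-- The components of a row operator `R : H^n → H`: `R_i = R ∘ ι_i`. -/
def comps (R : Hn H n →L[ℂ] H) : Fin n → H →L[ℂ] H := fun i => R ∘L inclL i

/-- `φ_λ(T) = Ψ_𝛌(−T)` for a tuple `T` and `λ ∈ 𝔹ⁿ`. -/
def phiOp (lam : EuclideanSpace ℂ (Fin n)) (T : Fin n → H →L[ℂ] H) : Hn H n →L[ℂ] H :=
  Psi (rowC lam) (-(rowOp T))

/-- The full-space characteristic function
`Θ_R(z) = -R + D_{R*} (1 - 𝐳 R*)⁻¹ 𝐳 D_R : H^n → H` of a row contraction `R`. -/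
def Theta (R : Hn H n →L[ℂ] H) (z : EuclideanSpace ℂ (Fin n)) : Hn H n →L[ℂ] H :=
  -R + defectStar R ∘L Ring.inverse (1 - rowC z ∘L adjoint R) ∘L (rowC z ∘L defect R)

/-- The involutive automorphism `φ_λ` of the unit ball `𝔹ⁿ`:
`φ_λ(z) = λ - s_λ (1 - ⟨z,λ⟩)⁻¹ (z - (1 - s_λ) P_λ z)`, where `⟨z,λ⟩ = Σ z_i conj λ_i`,
`s_λ = (1 - |λ|²)^(1/2)` and `P_λ` is the projection onto the span of `λ` (`P_0 = 0`). -/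
def ballAut (lam z : EuclideanSpace ℂ (Fin n)) : EuclideanSpace ℂ (Fin n) :=
  lam - ((Real.sqrt (1 - ‖lam‖ ^ 2) : ℂ) * (1 - (inner ℂ lam z : ℂ))⁻¹) •
    (z - ((1 : ℂ) - (Real.sqrt (1 - ‖lam‖ ^ 2) : ℂ)) •
      (((inner ℂ lam z : ℂ) / ((‖lam‖ : ℂ) ^ 2)) • lam))


section Aux

variable {H : Type*} [NormedAddCommGroup H] [InnerProductSpace ℂ H] [CompleteSpace H]

lemma isPositive_apply_eq_zero' {P : H →L[ℂ] H} (hP : P.IsPositive) {y : H}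
    (h : RCLike.re (inner ℂ (P y) y : ℂ) = 0) : P y = 0 := by
  have hP0 : (0 : H →L[ℂ] H) ≤ P := (ContinuousLinearMap.nonneg_iff_isPositive P).mpr hP
  have hSS : CFC.sqrt P * CFC.sqrt P = P := CFC.sqrt_mul_sqrt_self P hP0
  have hSpos : (0 : H →L[ℂ] H) ≤ CFC.sqrt P := CFC.sqrt_nonneg P
  have hSsym : LinearMap.IsSymmetric ((CFC.sqrt P : H →L[ℂ] H) : H →ₗ[ℂ] H) :=
    ContinuousLinearMap.isSelfAdjoint_iff_isSymmetric.mp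
      ((ContinuousLinearMap.nonneg_iff_isPositive _).mp hSpos).isSelfAdjoint
  have happ : P y = CFC.sqrt P (CFC.sqrt P y) := by
    conv_lhs => rw [← hSS]
    rfl
  have h2 : RCLike.re (inner ℂ (CFC.sqrt P y) (CFC.sqrt P y) : ℂ) = 0 := by
    have := hSsym (CFC.sqrt P y) y
    rw [happ] at h
    rw [← h]
    exact congrArg RCLike.re this.symm
  have h3 : CFC.sqrt P y = 0 := by
    have : ‖CFC.sqrt P y‖ ^ 2 = 0 := by
      rw [← @inner_self_eq_norm_sq ℂ]; exact h2
    simpa using pow_eq_zero_iff (n := 2) (by norm_num) |>.mp this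
  rw [happ, h3, map_zero]

end Aux

/-- For a commuting multicontraction `T`, the kernel of `1 - A_∞(T)` is invariant
under each `T_i^*`, and the compression `T̂` of `T` to it satisfies `Σ T̂_i T̂_i^* = 1`. -/



theorem statement1 (hn : 1 ≤ n) (T : Fin n → H →L[ℂ] H)
    (hcomm : ∀ i j, T i ∘L T j = T j ∘L T i)
    (hmc : ((1 : H →L[ℂ] H) - ∑ i, T i ∘L adjoint (T i)).IsPositive)
    (Ainf : H →L[ℂ] H)
    (hAinf : ∀ x : H, Tendsto (fun k => ((rho T)^[k] 1) x) atTop (nhds (Ainf x))) :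
    (∀ i, ∀ x ∈ (1 - Ainf : H →L[ℂ] H).ker, adjoint (T i) x ∈ (1 - Ainf : H →L[ℂ] H).ker) ∧
    ∑ i, (Submodule.orthogonalProjectionOnto (1 - Ainf : H →L[ℂ] H).ker ∘L T i ∘L
        ((1 - Ainf : H →L[ℂ] H).ker).subtypeL) ∘L
      adjoint (Submodule.orthogonalProjectionOnto (1 - Ainf : H →L[ℂ] H).ker ∘L T i ∘L
        ((1 - Ainf : H →L[ℂ] H).ker).subtypeL) = 1 := by
  classical
  -- basic formulas for `rho`
  have rho_apply : ∀ (X : H →L[ℂ] H) (x : H), rho T X x = ∑ i, T i (X (adjoint (T i) x)) := by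
    intro X x; simp [rho, ContinuousLinearMap.sum_apply]
  have rho_sub : ∀ X Y : H →L[ℂ] H, rho T (X - Y) = rho T X - rho T Y := by
    intro X Y
    simp [rho, ContinuousLinearMap.comp_sub, ContinuousLinearMap.sub_comp,
      Finset.sum_sub_distrib]
  have rho_one : rho T 1 = ∑ i, T i ∘L adjoint (T i) := by
    simp [rho, ContinuousLinearMap.one_def, ContinuousLinearMap.id_comp]
  have rho_pos : ∀ {X : H →L[ℂ] H}, X.IsPositive → (rho T X).IsPositive := by
    intro X hX
    exact Finset.sum_induction _ _ (fun a b ha hb => ha.add hb) isPositive_zero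
      (fun i _ => hX.conj_adjoint (T i))
  -- positivity of the iterates and of their defects
  have hPpos : ∀ k, ((rho T)^[k] 1).IsPositive := by
    intro k; induction k with
    | zero => simpa using isPositive_one
    | succ k ih => rw [Function.iterate_succ_apply']; exact rho_pos ih
  have hQpos : ∀ k, ((1 : H →L[ℂ] H) - (rho T)^[k] 1).IsPositive := by
    intro k; induction k with
    | zero => simpa using isPositive_zero
    | succ k ih =>
      rw [Function.iterate_succ_apply']
      have heq : (1 : H →L[ℂ] H) - rho T ((rho T)^[k] 1)
          = ((1 : H →L[ℂ] H) - ∑ i, T i ∘L adjoint (T i)) + rho T (1 - (rho T)^[k] 1) := by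
        rw [rho_sub, rho_one]; abel
      rw [heq]; exact hmc.add (rho_pos ih)
  -- `Ainf` is self-adjoint
  have hA_symm : ∀ x y : H, (inner ℂ (Ainf x) y : ℂ) = inner ℂ x (Ainf y) := by
    intro x y
    have h1 : Tendsto (fun k => (inner ℂ ((rho T)^[k] 1 x) y : ℂ)) atTop
        (nhds (inner ℂ (Ainf x) y)) := (hAinf x).inner tendsto_const_nhds
    have h2 : Tendsto (fun k => (inner ℂ x ((rho T)^[k] 1 y) : ℂ)) atTop
        (nhds (inner ℂ x (Ainf y))) := tendsto_const_nhds.inner (hAinf y)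
    have he : (fun k => (inner ℂ ((rho T)^[k] 1 x) y : ℂ))
        = fun k => (inner ℂ x ((rho T)^[k] 1 y) : ℂ) := by
      funext k
      exact ContinuousLinearMap.isSelfAdjoint_iff_isSymmetric.mp (hPpos k).isSelfAdjoint x y
    rw [he] at h1
    exact tendsto_nhds_unique h1 h2
  have hA_sa : IsSelfAdjoint Ainf :=
    ContinuousLinearMap.isSelfAdjoint_iff_isSymmetric.mpr fun x y => hA_symm x y
  -- `1 - Ainf` is positive
  have h1A : ((1 : H →L[ℂ] H) - Ainf).IsPositive := by
    refine isPositive_def'.mpr ⟨isPositive_one.isSelfAdjoint.sub hA_sa, fun x => ?_⟩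
    have htend : Tendsto (fun k => (((1 : H →L[ℂ] H) - (rho T)^[k] 1) x)) atTop
        (nhds (((1 : H →L[ℂ] H) - Ainf) x)) := by
      simpa [ContinuousLinearMap.sub_apply] using tendsto_const_nhds.sub (hAinf x)
    have ht : Tendsto
        (fun k => RCLike.re (inner ℂ (((1 : H →L[ℂ] H) - (rho T)^[k] 1) x) x : ℂ)) atTop
        (nhds (RCLike.re (inner ℂ (((1 : H →L[ℂ] H) - Ainf) x) x : ℂ))) :=
      (RCLike.continuous_re.tendsto _).comp (htend.inner tendsto_const_nhds)
    exact ge_of_tendsto ht (Eventually.of_forall fun k => (hQpos k).re_inner_nonneg_left x)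
  -- `Ainf` is a fixed point of `rho`
  have hfix : rho T Ainf = Ainf := by
    ext x
    have h1 : Tendsto (fun k => (rho T)^[k + 1] 1 x) atTop (nhds (Ainf x)) :=
      (hAinf x).comp (tendsto_add_atTop_nat 1)
    have h2 : Tendsto (fun k => (rho T)^[k + 1] 1 x) atTop (nhds (rho T Ainf x)) := by
      have he : (fun k => (rho T)^[k + 1] 1 x)
          = fun k => ∑ i, T i ((rho T)^[k] 1 (adjoint (T i) x)) := by
        funext k; rw [Function.iterate_succ_apply', rho_apply]
      rw [he, rho_apply]
      exact tendsto_finset_sum _ fun i _ =>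
        ((T i).continuous.tendsto _).comp (hAinf (adjoint (T i) x))
    exact tendsto_nhds_unique h2 h1
  -- membership in the kernel
  have hker : ∀ x : H, x ∈ ((1 : H →L[ℂ] H) - Ainf).ker ↔ Ainf x = x := by
    intro x
    rw [LinearMap.mem_ker]
    constructor
    · intro h
      have h2 : x - Ainf x = 0 := by
        simpa [ContinuousLinearMap.sub_apply] using h
      exact (sub_eq_zero.mp h2).symm
    · intro h
      simp [ContinuousLinearMap.sub_apply, h]
  -- the main pointwise computation
  have hmain : ∀ x : H, Ainf x = x →
      (∀ i, Ainf (adjoint (T i) x) = adjoint (T i) x) ∧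
      ∑ i, ‖adjoint (T i) x‖ ^ 2 = ‖x‖ ^ 2 := by
    intro x hx
    have hsum1 : ∀ Z : H →L[ℂ] H,
        ∑ i, (inner ℂ (Z (adjoint (T i) x)) (adjoint (T i) x) : ℂ) = inner ℂ (rho T Z x) x := by
      intro Z
      rw [rho_apply, sum_inner]
      refine Finset.sum_congr rfl fun i _ => ?_
      exact ContinuousLinearMap.adjoint_inner_right (T i) _ _
    have hZ : rho T ((1 : H →L[ℂ] H) - Ainf)
        = (∑ i, T i ∘L adjoint (T i)) - Ainf := by
      rw [rho_sub, rho_one, hfix]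
    have hiden : ∑ i, (inner ℂ (((1 : H →L[ℂ] H) - Ainf) (adjoint (T i) x)) (adjoint (T i) x) : ℂ)
        + inner ℂ ((((1 : H →L[ℂ] H) - ∑ i, T i ∘L adjoint (T i))) x) x = 0 := by
      rw [hsum1, hZ]
      simp only [ContinuousLinearMap.sub_apply, ContinuousLinearMap.one_apply, hx]
      rw [inner_sub_left, inner_sub_left]
      ring
    -- pass to real parts
    set f : Fin n → ℝ :=
      fun i => RCLike.re (inner ℂ (((1 : H →L[ℂ] H) - Ainf) (adjoint (T i) x)) (adjoint (T i) x) : ℂ)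
      with hf
    set g : ℝ :=
      RCLike.re (inner ℂ ((((1 : H →L[ℂ] H) - ∑ i, T i ∘L adjoint (T i))) x) x : ℂ) with hg
    have hre : ∑ i, f i + g = 0 := by
      have h := congrArg RCLike.re hiden
      rw [map_add, map_sum, map_zero] at h
      exact h
    have hf0 : ∀ i ∈ Finset.univ, (0:ℝ) ≤ f i := fun i _ => h1A.re_inner_nonneg_left _
    have hg0 : (0:ℝ) ≤ g := hmc.re_inner_nonneg_left x
    have hsf0 : (0:ℝ) ≤ ∑ i, f i := Finset.sum_nonneg hf0
    have hsum0 : ∑ i, f i = 0 := by linarith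
    have hgz : g = 0 := by linarith
    have hfz : ∀ i, f i = 0 := by
      intro i
      exact (Finset.sum_eq_zero_iff_of_nonneg hf0).mp hsum0 i (Finset.mem_univ i)
    have hinv : ∀ i, Ainf (adjoint (T i) x) = adjoint (T i) x := by
      intro i
      have := isPositive_apply_eq_zero' h1A (hfz i)
      have h2 : adjoint (T i) x - Ainf (adjoint (T i) x) = 0 := by
        simpa [ContinuousLinearMap.sub_apply] using this
      have := sub_eq_zero.mp h2
      exact this.symm
    refine ⟨hinv, ?_⟩
    -- norm identity
    have hnormsum : ∑ i, ‖adjoint (T i) x‖ ^ 2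
        = RCLike.re (inner ℂ ((∑ i, T i ∘L adjoint (T i)) x) x : ℂ) := by
      have h1 : ∑ i, (inner ℂ ((1 : H →L[ℂ] H) (adjoint (T i) x)) (adjoint (T i) x) : ℂ)
          = inner ℂ (rho T 1 x) x := hsum1 1
      rw [rho_one] at h1
      have h2 := congrArg RCLike.re h1
      simp only [map_sum, ContinuousLinearMap.one_apply] at h2
      rw [← h2]
      refine Finset.sum_congr rfl fun i _ => ?_
      rw [← @inner_self_eq_norm_sq ℂ]
    have hgz' : RCLike.re (inner ℂ ((∑ i, T i ∘L adjoint (T i)) x) x : ℂ) = ‖x‖ ^ 2 := by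
      have := hgz
      rw [hg] at this
      simp only [ContinuousLinearMap.sub_apply, ContinuousLinearMap.one_apply,
        inner_sub_left, map_sub] at this
      have hxx : RCLike.re (inner ℂ x x : ℂ) = ‖x‖ ^ 2 := @inner_self_eq_norm_sq ℂ _ _ _ _ x
      linarith
    rw [hnormsum, hgz']
  constructor
  · intro i x hx
    rw [hker] at hx ⊢
    exact (hmain x hx).1 i
  · -- the compression identity
    set K := ((1 : H →L[ℂ] H) - Ainf).ker with hKdef
    have hadj : ∀ i, adjoint (Submodule.orthogonalProjectionOnto K ∘L T i ∘L K.subtypeL)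
        = Submodule.orthogonalProjectionOnto K ∘L adjoint (T i) ∘L K.subtypeL := by
      intro i
      simp only [← ContinuousLinearMap.comp_assoc]
      rw [ContinuousLinearMap.adjoint_comp, ContinuousLinearMap.adjoint_comp,
        Submodule.adjoint_subtypeL, Submodule.adjoint_orthogonalProjectionOnto]
      simp [ContinuousLinearMap.comp_assoc]
      rfl
    set M : K →L[ℂ] K := (1 : K →L[ℂ] K) - ∑ i,
      (Submodule.orthogonalProjectionOnto K ∘L T i ∘L K.subtypeL) ∘L
        adjoint (Submodule.orthogonalProjectionOnto K ∘L T i ∘L K.subtypeL) with hM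
    have key : ∀ u : K, (inner ℂ (M u) u : ℂ) = 0 := by
      intro u
      have hu : Ainf (u : H) = u := (hker u).mp u.2
      have hnorm := (hmain u hu).2
      have hmem : ∀ i, adjoint (T i) (u : H) ∈ K := fun i => (hker _).mpr ((hmain _ hu).1 i)
      have hterm : ∀ i, (inner ℂ (((Submodule.orthogonalProjectionOnto K ∘L T i ∘L K.subtypeL) ∘L
          adjoint (Submodule.orthogonalProjectionOnto K ∘L T i ∘L K.subtypeL)) u) u : ℂ)
          = inner ℂ (adjoint (T i) (u : H)) (adjoint (T i) (u : H)) := by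
        intro i
        have e := ContinuousLinearMap.adjoint_inner_right
          (Submodule.orthogonalProjectionOnto K ∘L T i ∘L K.subtypeL)
          ((adjoint (Submodule.orthogonalProjectionOnto K ∘L T i ∘L K.subtypeL)) u) u
        have hcoe : ((Submodule.orthogonalProjectionOnto K ∘L adjoint (T i) ∘L K.subtypeL) u : H)
            = adjoint (T i) (u : H) := by
          simp only [ContinuousLinearMap.comp_apply, Submodule.subtypeL_apply]
          exact Submodule.starProjection_eq_self_iff.mpr (hmem i)
        rw [ContinuousLinearMap.comp_apply, ← e, hadj i, Submodule.coe_inner, hcoe]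
      rw [hM]
      simp only [ContinuousLinearMap.sub_apply, ContinuousLinearMap.one_apply,
        ContinuousLinearMap.sum_apply, inner_sub_left, sum_inner]
      rw [Finset.sum_congr rfl fun i _ => hterm i, Submodule.coe_inner, sub_eq_zero]
      simp only [inner_self_eq_norm_sq_to_K]
      exact_mod_cast hnorm.symm
    have hM0 : M = 0 := by
      apply ContinuousLinearMap.coe_injective
      rw [ContinuousLinearMap.coe_zero]
      exact (inner_map_self_eq_zero (M : K →ₗ[ℂ] K)).mp fun u => key u
    have := sub_eq_zero.mp hM0
    exact this.symm

end
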